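/- For every finite, simple, connected, undirected graph G and every initial position (x,y) ∈ V², the single-cop concurrent cops and robber game with the expected-capture-time payoff has a value: inf_{π_C} sup_{π_R} v_{(x,y)}(π_C, π_R) = sup_{π_R} inf_{π_C} v_{(x,y)}(π_C, π_R) (as elements of [0,∞]). -/

import Mathlib

open Finset Filter

noncomputable section

variable {V : Type*} [Fintype V] [DecidableEq V]

/-- The closed neighborhood `N[u]` of a vertex `u`: `u` together with its neighbors. -/
def nbhd (G : SimpleGraph V) [DecidableRel G.Adj] (u : V) : Finset V :=
  insert u (G.neighborFinset u)

lemma nbhd_nonempty (G : SimpleGraph V) [DecidableRel G.Adj] (u : V) :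
    (nbhd G u).Nonempty :=
  ⟨u, Finset.mem_insert_self u _⟩

/-! ### The single-cop concurrent game, with the expected-capture-time payoff -/

/-- A randomized strategy in the single-cop concurrent game: to each finite history of
positions (cop location, robber location) it assigns a distribution over next moves. -/
abbrev Strat (V : Type*) := List (V × V) → PMF V

/-- A strategy is memoryless if the distribution it assigns depends only on the
current (most recent) position. -/
def Memoryless (π : Strat V) : Prop :=
  ∀ h₁ h₂ : List (V × V), h₁.getLast? = h₂.getLast? → π h₁ = π h₂

/-- The single-cop CCCR transition function: simultaneous moves within closed
neighborhoods (illegal moves ignored), capture positions are absorbing, and a swap of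
adjacent vertices is an \"en passant\" capture. -/
def step1 (G : SimpleGraph V) [DecidableRel G.Adj] (p : V × V) (u w : V) : V × V :=
  if p.1 = p.2 then p
  else
    let u' := if u ∈ nbhd G p.1 then u else p.1
    let w' := if w ∈ nbhd G p.2 then w else p.2
    if u' = p.2 ∧ w' = p.1 then (u', u') else (u', w')

/-- The distribution over histories of the first `t+1` positions, induced by the
strategies `πC, πR` and the initial position `init`. -/
def play1 (G : SimpleGraph V) [DecidableRel G.Adj]
    (πC πR : Strat V) (init : V × V) : ℕ → PMF (List (V × V))
  | 0 => PMF.pure [init]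
  | (t+1) => (play1 G πC πR init t).bind fun h =>
      (πC h).bind fun u => (πR h).bind fun w =>
        PMF.pure (h ++ [step1 G (h.getLast?.getD init) u w])

/-- The probability that cop and robber occupy different vertices at time `t`
(capture is absorbing, so this is the probability that the robber is still free). -/
def freeProb1 (G : SimpleGraph V) [DecidableRel G.Adj]
    (πC πR : Strat V) (init : V × V) (t : ℕ) : ENNReal :=
  (play1 G πC πR init t).toOuterMeasure
    {h | (h.getLast?.getD init).1 ≠ (h.getLast?.getD init).2}

/-- The payoff: the expected number of rounds `t ≥ 0` at which cop and robber occupy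
different vertices, i.e. the expected capture time. -/
def payoff (G : SimpleGraph V) [DecidableRel G.Adj]
    (πC πR : Strat V) (init : V × V) : ENNReal :=
  ∑' t : ℕ, freeProb1 G πC πR init t

/-- The (upper) value of the game started at `init`; the cop minimizes and the robber
maximizes the expected capture time. -/
def gameValue (G : SimpleGraph V) [DecidableRel G.Adj] (init : V × V) : ENNReal :=
  ⨅ πC : Strat V, ⨆ πR : Strat V, payoff G πC πR init

open scoped ENNReal

/-!
Shapley's value iteration. Backward induction defines the value `stageValue n` of the game
truncated after `n` rounds: each round is a finite matrix game, which has a value by the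
von Neumann–Sion minimax theorem, and the values increase to a limit `limitValue`. Playing an
optimal strategy of the `n`-round game, the robber guarantees `stageValue n`, so the lower value
is at least `limitValue`. Conversely, the mixed actions of the cop that are good against
`stageValue n` form a decreasing sequence of nonempty compact sets; a common element is a
stationary action against which `limitValue` satisfies the one-step Bellman inequality, and
telescoping along the play bounds the expected capture time by `limitValue`.
-/

namespace PMF
variable {α β : Type*}

lemma tsum_bind_mul (p : PMF α) (f : α → PMF β) (F : β → ℝ≥0∞) :
    ∑' b, p.bind f b * F b = ∑' a, p a * ∑' b, f a b * F b := by
  simp_rw [PMF.bind_apply, ← ENNReal.tsum_mul_right, ← ENNReal.tsum_mul_left, mul_assoc]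
  exact ENNReal.tsum_comm

lemma tsum_pure_mul (a : α) (F : α → ℝ≥0∞) : ∑' b, PMF.pure a b * F b = F a := by
  simp [PMF.pure_apply]

lemma tsum_mul_const (p : PMF α) (c : ℝ≥0∞) : ∑' a, p a * c = c := by
  rw [ENNReal.tsum_mul_right, p.tsum_coe, one_mul]

end PMF

lemma ENNReal.tsum_mul_tsum_mul_comm {α β : Type*} (a : α → ℝ≥0∞) (b : β → ℝ≥0∞)
    (M : α → β → ℝ≥0∞) :
    ∑' u, a u * ∑' w, b w * M u w = ∑' w, b w * ∑' u, a u * M u w := by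
  simp_rw [← ENNReal.tsum_mul_left, mul_left_comm (a _)]
  exact ENNReal.tsum_comm

section Telescoping

variable {M : Type*} [AddCommMonoid M] [PartialOrder M] [IsOrderedAddMonoid M] {a b : ℕ → M}

lemma sum_range_add_le_of_add_le (h : ∀ k, b k + a (k + 1) ≤ a k) (n : ℕ) :
    ∑ k ∈ range n, b k + a n ≤ a 0 := by
  induction n with
  | zero => simp
  | succ n ih =>
    calc ∑ k ∈ range (n + 1), b k + a (n + 1) = ∑ k ∈ range n, b k + (b n + a (n + 1)) := by
          rw [sum_range_succ, add_assoc]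
      _ ≤ ∑ k ∈ range n, b k + a n := by gcongr; exact h n
      _ ≤ a 0 := ih

lemma le_sum_range_add_of_le_add {n : ℕ} (h : ∀ k < n, a k ≤ b k + a (k + 1)) :
    a 0 ≤ ∑ k ∈ range n, b k + a n := by
  induction n with
  | zero => simp
  | succ n ih =>
    calc a 0 ≤ ∑ k ∈ range n, b k + a n := ih fun k hk => h k (hk.trans n.lt_succ_self)
      _ ≤ ∑ k ∈ range n, b k + (b n + a (n + 1)) := by gcongr; exact h n n.lt_succ_self
      _ = ∑ k ∈ range (n + 1), b k + a (n + 1) := by rw [sum_range_succ, add_assoc]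

end Telescoping

section MatrixGame

variable {α β : Type*}

def pmfOfStdSimplex [Fintype α] (x : α → ℝ) (hx : x ∈ stdSimplex ℝ α) : PMF α :=
  PMF.ofFintype (fun u => ENNReal.ofReal (x u))
    (by rw [← ENNReal.ofReal_sum_of_nonneg fun u _ => hx.1 u, hx.2, ENNReal.ofReal_one])

lemma tsum_pmfOfStdSimplex_mul [Fintype α] (x : α → ℝ) (hx : x ∈ stdSimplex ℝ α) {c : α → ℝ≥0∞}
    (hc : ∀ u, c u ≠ ⊤) :
    ∑' u, pmfOfStdSimplex x hx u * c u = ENNReal.ofReal (∑ u, x u * (c u).toReal) := by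
  rw [tsum_fintype,
    ENNReal.ofReal_sum_of_nonneg fun u _ => mul_nonneg (hx.1 u) ENNReal.toReal_nonneg]
  refine Finset.sum_congr rfl fun u _ => ?_
  rw [pmfOfStdSimplex, PMF.ofFintype_apply, ENNReal.ofReal_mul (hx.1 u),
    ENNReal.ofReal_toReal (hc u)]

def matrixValue (M : α → β → ℝ≥0∞) : ℝ≥0∞ := ⨅ μ : PMF α, ⨆ w, ∑' u, μ u * M u w

lemma matrixValue_mono {M N : α → β → ℝ≥0∞} (h : M ≤ N) : matrixValue M ≤ matrixValue N :=
  iInf_mono fun _ => iSup_mono fun w => ENNReal.tsum_le_tsum fun u => by gcongr; exact h u w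

lemma matrixValue_le_of_forall_le [Nonempty α] {M : α → β → ℝ≥0∞} {c : ℝ≥0∞}
    (h : ∀ u w, M u w ≤ c) :
    matrixValue M ≤ c := by
  refine iInf_le_of_le (PMF.pure (Classical.arbitrary α)) (iSup_le fun w => ?_)
  rw [PMF.tsum_pure_mul]
  exact h _ w

variable [Fintype α] [Fintype β] [Nonempty α] [Nonempty β]

theorem exists_saddlePoint (M : α → β → ℝ≥0∞) (hM : ∀ u w, M u w ≠ ⊤) :
    ∃ μ : PMF α, ∃ ν : PMF β, ∀ u w, ∑' u', μ u' * M u' w ≤ ∑' w', ν w' * M u w' := by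
  classical
  let A : Matrix α β ℝ := .of fun u w => (M u w).toReal
  let f : (α → ℝ) →ₗ[ℝ] (β → ℝ) →ₗ[ℝ] ℝ := Matrix.toLinearMap₂' ℝ A
  have hX : (stdSimplex ℝ α).Nonempty := ⟨_, single_mem_stdSimplex ℝ (Classical.arbitrary α)⟩
  have hY : (stdSimplex ℝ β).Nonempty := ⟨_, single_mem_stdSimplex ℝ (Classical.arbitrary β)⟩
  obtain ⟨a, ha, b, hb, hab⟩ := Sion.exists_isSaddlePointOn (f := fun x y => f x y) hX
    (convex_stdSimplex ℝ α) (isCompact_stdSimplex ℝ α)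
    (fun y _ =>
      (f.flip y).continuous_of_finiteDimensional.lowerSemicontinuous.lowerSemicontinuousOn _)
    (fun y _ => ((f.flip y).convexOn (convex_stdSimplex ℝ α)).quasiconvexOn)
    (convex_stdSimplex ℝ β) hY (isCompact_stdSimplex ℝ β)
    (fun x _ => (f x).continuous_of_finiteDimensional.upperSemicontinuous.upperSemicontinuousOn _)
    (fun x _ => ((f x).concaveOn (convex_stdSimplex ℝ β)).quasiconcaveOn)
  refine ⟨pmfOfStdSimplex a ha, pmfOfStdSimplex b hb, fun u w => ?_⟩
  have key := hab _ (single_mem_stdSimplex ℝ u) _ (single_mem_stdSimplex ℝ w)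
  simp only [f, Matrix.toLinearMap₂'_apply', Matrix.mulVec_single_one, single_dotProduct,
    one_mul] at key
  rw [tsum_pmfOfStdSimplex_mul a ha fun u' => hM u' w,
    tsum_pmfOfStdSimplex_mul b hb fun w' => hM u w']
  refine ENNReal.ofReal_le_ofReal ?_
  simpa [dotProduct, Matrix.mulVec, A, mul_comm] using key

lemma exists_matrixValue_le_tsum (M : α → β → ℝ≥0∞) (hM : ∀ u w, M u w ≠ ⊤) :
    ∃ ν : PMF β, ∀ u, matrixValue M ≤ ∑' w, ν w * M u w := by
  obtain ⟨μ, ν, hμν⟩ := exists_saddlePoint M hM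
  exact ⟨ν, fun u => iInf_le_of_le μ (iSup_le fun w => hμν u w)⟩

lemma exists_tsum_le_matrixValue (M : α → β → ℝ≥0∞) (hM : ∀ u w, M u w ≠ ⊤) :
    ∃ μ : PMF α, ∀ w, ∑' u, μ u * M u w ≤ matrixValue M := by
  obtain ⟨μ, ν, hμν⟩ := exists_saddlePoint M hM
  refine ⟨μ, fun w => le_iInf fun μ' => ?_⟩
  calc ∑' u, μ u * M u w
      = ∑' u', μ' u' * ∑' u, μ u * M u w := (PMF.tsum_mul_const μ' _).symm
    _ ≤ ∑' u', μ' u' * ∑' w', ν w' * M u' w' :=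
        ENNReal.tsum_le_tsum fun u' => by gcongr; exact hμν u' w
    _ = ∑' w', ν w' * ∑' u', μ' u' * M u' w' := ENNReal.tsum_mul_tsum_mul_comm _ _ _
    _ ≤ ∑' w', ν w' * ⨆ w'', ∑' u', μ' u' * M u' w'' :=
        ENNReal.tsum_le_tsum fun w' => by
          gcongr; exact le_iSup (fun w'' => ∑' u', μ' u' * M u' w'') w'
    _ = ⨆ w'', ∑' u', μ' u' * M u' w'' := PMF.tsum_mul_const ν _

lemma exists_tsum_iSup_le {M : ℕ → α → β → ℝ≥0∞} (hmono : Monotone M)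
    (hM : ∀ n u w, M n u w ≠ ⊤) {c : ℝ≥0∞} (hc : ∀ n, matrixValue (M n) ≤ c) :
    ∃ μ : PMF α, ∀ w, ∑' u, μ u * ⨆ n, M n u w ≤ c := by
  let K : ℕ → Set (α → ℝ≥0∞) := fun n =>
    {x | ∑ u, x u = 1} ∩ ⋂ w, {x | ∑ u, x u * M n u w ≤ c}
  have hclosed : ∀ n, IsClosed (K n) := fun n =>
    (isClosed_eq (continuous_finsetSum _ fun u _ => continuous_apply u) continuous_const).inter
      (isClosed_iInter fun w => isClosed_le (continuous_finsetSum _ fun u _ =>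
        (ENNReal.continuous_mul_const (hM n u w)).comp (continuous_apply u)) continuous_const)
  have hanti : ∀ n, K (n + 1) ⊆ K n := fun n x hx =>
    ⟨hx.1, Set.mem_iInter.2 fun w => le_trans (Finset.sum_le_sum fun u _ =>
      mul_le_mul_right (hmono n.le_succ u w) (x u)) (Set.mem_iInter.1 hx.2 w)⟩
  have hne : ∀ n, (K n).Nonempty := fun n => by
    obtain ⟨μ, hμ⟩ := exists_tsum_le_matrixValue (M n) (hM n)
    exact ⟨μ, (tsum_fintype _).symm.trans μ.tsum_coe, Set.mem_iInter.2 fun w =>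
      (tsum_fintype _).symm.trans_le ((hμ w).trans (hc n))⟩
  obtain ⟨x, hx⟩ := IsCompact.nonempty_iInter_of_sequence_nonempty_isCompact_isClosed K hanti hne
    (hclosed 0).isCompact hclosed
  rw [Set.mem_iInter] at hx
  refine ⟨PMF.ofFintype x (hx 0).1, fun w => ?_⟩
  simp_rw [tsum_fintype, PMF.ofFintype_apply, ENNReal.mul_iSup]
  rw [ENNReal.finsetSum_iSup_of_monotone fun u n m hnm => by gcongr; exact hmono hnm u w]
  exact iSup_le fun n => Set.mem_iInter.1 (hx n).2 w

end MatrixGame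

section FreeIndicator

variable {α : Type*} [DecidableEq α]

def freeInd (p : α × α) : ℝ≥0∞ := if p.1 = p.2 then 0 else 1

lemma freeInd_le_one (p : α × α) : freeInd p ≤ 1 := by
  unfold freeInd; split_ifs <;> simp

lemma freeInd_ne_top (p : α × α) : freeInd p ≠ ⊤ :=
  ne_top_of_le_ne_top ENNReal.one_ne_top (freeInd_le_one p)

end FreeIndicator

section Game

variable (G : SimpleGraph V) [DecidableRel G.Adj]

def lastPos (init : V × V) (h : List (V × V)) : V × V := h.getLast?.getD init

def histExp (πC πR : Strat V) (init : V × V) (t : ℕ) (F : List (V × V) → ℝ≥0∞) : ℝ≥0∞ :=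
  ∑' h, play1 G πC πR init t h * F h

def stepExp (πC πR : Strat V) (init : V × V) (Φ : V × V → ℝ≥0∞) (h : List (V × V)) : ℝ≥0∞ :=
  ∑' u, πC h u * ∑' w, πR h w * Φ (step1 G (lastPos init h) u w)

variable {G}

lemma histExp_zero (πC πR : Strat V) (init : V × V) (F : List (V × V) → ℝ≥0∞) :
    histExp G πC πR init 0 F = F [init] := by
  rw [histExp, play1, PMF.tsum_pure_mul]

lemma histExp_succ (πC πR : Strat V) (init : V × V) (t : ℕ) (Φ : V × V → ℝ≥0∞) :
    histExp G πC πR init (t + 1) (fun h => Φ (lastPos init h)) =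
      histExp G πC πR init t (stepExp G πC πR init Φ) := by
  simp only [histExp, play1, stepExp, PMF.tsum_bind_mul, PMF.tsum_pure_mul, lastPos,
    List.getLast?_concat, Option.getD_some]

lemma histExp_add (πC πR : Strat V) (init : V × V) (t : ℕ) (F F' : List (V × V) → ℝ≥0∞) :
    histExp G πC πR init t (F + F') = histExp G πC πR init t F + histExp G πC πR init t F' := by
  simp only [histExp, Pi.add_apply, mul_add, ENNReal.tsum_add]

lemma histExp_mono (πC πR : Strat V) (init : V × V) (t : ℕ) {F F' : List (V × V) → ℝ≥0∞}
    (hF : ∀ h ∈ (play1 G πC πR init t).support, F h ≤ F' h) :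
    histExp G πC πR init t F ≤ histExp G πC πR init t F' := by
  refine ENNReal.tsum_le_tsum fun h => ?_
  by_cases hh : h ∈ (play1 G πC πR init t).support
  · exact mul_le_mul_right (hF h hh) _
  · simp [(PMF.apply_eq_zero_iff _ h).2 hh]

lemma length_of_mem_support_play1 {πC πR : Strat V} {init : V × V} {t : ℕ} {h : List (V × V)}
    (hh : h ∈ (play1 G πC πR init t).support) : h.length = t + 1 := by
  induction t generalizing h with
  | zero => simp_all [play1]
  | succ t ih =>
    simp only [play1, PMF.support_bind, PMF.support_pure, Set.mem_iUnion,
      Set.mem_singleton_iff] at hh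
    obtain ⟨h', hh', -, -, -, -, rfl⟩ := hh
    simp [ih hh']

lemma freeProb1_eq_histExp (πC πR : Strat V) (init : V × V) (t : ℕ) :
    freeProb1 G πC πR init t = histExp G πC πR init t (fun h => freeInd (lastPos init h)) := by
  rw [freeProb1, PMF.toOuterMeasure_apply, histExp]
  refine tsum_congr fun h => ?_
  by_cases hc : (lastPos init h).1 = (lastPos init h).2 <;>
    simp_all [Set.indicator, freeInd, lastPos]

lemma freeProb1_add_histExp_succ (πC πR : Strat V) (init : V × V) (t : ℕ)
    (Φ : V × V → ℝ≥0∞) :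
    freeProb1 G πC πR init t + histExp G πC πR init (t + 1) (fun h => Φ (lastPos init h)) =
      histExp G πC πR init t (fun h => freeInd (lastPos init h) + stepExp G πC πR init Φ h) := by
  rw [freeProb1_eq_histExp, histExp_succ, ← histExp_add]
  rfl

lemma payoff_le_of_supersolution {πC πR : Strat V} {init : V × V} {Φ : V × V → ℝ≥0∞}
    (hΦ : ∀ h, freeInd (lastPos init h) + stepExp G πC πR init Φ h ≤ Φ (lastPos init h)) :
    payoff G πC πR init ≤ Φ init := by
  have htel := sum_range_add_le_of_add_le (b := freeProb1 G πC πR init)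
    (a := fun k => histExp G πC πR init k (fun h => Φ (lastPos init h))) fun k => by
      rw [freeProb1_add_histExp_succ]
      exact histExp_mono _ _ _ _ fun h _ => hΦ h
  simp only [histExp_zero] at htel
  rw [payoff, ENNReal.tsum_eq_iSup_nat]
  exact iSup_le fun n => le_self_add.trans (htel n)

lemma le_payoff_of_subsolution {πC πR : Strat V} {init : V × V} {n : ℕ}
    {Φ : ℕ → V × V → ℝ≥0∞} (hΦn : Φ n = 0)
    (hΦ : ∀ k < n, ∀ h ∈ (play1 G πC πR init k).support,
      Φ k (lastPos init h) ≤ freeInd (lastPos init h) + stepExp G πC πR init (Φ (k + 1)) h) :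
    Φ 0 init ≤ payoff G πC πR init := by
  have htel := le_sum_range_add_of_le_add (b := freeProb1 G πC πR init)
    (a := fun k => histExp G πC πR init k (fun h => Φ k (lastPos init h))) (n := n) fun k hk => by
      rw [freeProb1_add_histExp_succ]
      exact histExp_mono _ _ _ _ (hΦ k hk)
  rw [histExp_zero] at htel
  simp only [hΦn, Pi.zero_apply, histExp, mul_zero, tsum_zero, add_zero] at htel
  exact htel.trans (ENNReal.sum_le_tsum _)

end Game

section Value

variable (G : SimpleGraph V) [DecidableRel G.Adj]

/-- Capture positions need no separate case: there `step1` is constant and `freeInd` vanishes. -/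
def stageValue : ℕ → V × V → ℝ≥0∞
  | 0 => 0
  | n + 1 => fun p => freeInd p + matrixValue fun u w => stageValue n (step1 G p u w)

def limitValue (p : V × V) : ℝ≥0∞ := ⨆ n, stageValue G n p

variable {G}

lemma stageValue_monotone : Monotone (stageValue G) := by
  refine monotone_nat_of_le_succ fun n => ?_
  induction n with
  | zero => exact fun _ => zero_le
  | succ n ih => exact fun p => add_le_add le_rfl (matrixValue_mono fun u w => ih _)

lemma stageValue_le (n : ℕ) (p : V × V) : stageValue G n p ≤ n := by
  have : Nonempty V := ⟨p.1⟩
  induction n generalizing p with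
  | zero => simp [stageValue]
  | succ n ih =>
    calc stageValue G (n + 1) p ≤ 1 + (n : ℝ≥0∞) :=
          add_le_add (freeInd_le_one p) (matrixValue_le_of_forall_le fun u w => ih _)
      _ = (n + 1 : ℕ) := by push_cast; ring

lemma stageValue_ne_top (n : ℕ) (p : V × V) : stageValue G n p ≠ ⊤ :=
  ne_top_of_le_ne_top (ENNReal.natCast_ne_top n) (stageValue_le n p)

lemma freeInd_le_limitValue (p : V × V) : freeInd p ≤ limitValue G p :=
  le_iSup_of_le 1 le_self_add

variable (G)

lemma exists_copAction (p : V × V) : ∃ μ : PMF V,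
    ∀ w, ∑' u, μ u * limitValue G (step1 G p u w) ≤ limitValue G p - freeInd p := by
  have : Nonempty V := ⟨p.1⟩
  exact exists_tsum_iSup_le (M := fun n u w => stageValue G n (step1 G p u w))
    (fun m n hmn u w => stageValue_monotone hmn _) (fun n u w => stageValue_ne_top n _)
    fun n => ENNReal.le_sub_of_add_le_left (freeInd_ne_top p) (le_iSup_of_le (n + 1) le_rfl)

def copAction (p : V × V) : PMF V := (exists_copAction G p).choose

lemma exists_robAction (p : V × V) (n : ℕ) : ∃ ν : PMF V, ∀ u,
    matrixValue (fun u w => stageValue G n (step1 G p u w)) ≤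
      ∑' w, ν w * stageValue G n (step1 G p u w) := by
  have : Nonempty V := ⟨p.1⟩
  exact exists_matrixValue_le_tsum _ fun u w => stageValue_ne_top n _

def robAction (p : V × V) (n : ℕ) : PMF V := (exists_robAction G p n).choose

variable {G}

lemma freeInd_add_copAction_le (p : V × V) (ν : PMF V) :
    freeInd p + ∑' u, copAction G p u * ∑' w, ν w * limitValue G (step1 G p u w) ≤
      limitValue G p := by
  calc freeInd p + ∑' u, copAction G p u * ∑' w, ν w * limitValue G (step1 G p u w)
      = freeInd p + ∑' w, ν w * ∑' u, copAction G p u * limitValue G (step1 G p u w) := by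
        rw [ENNReal.tsum_mul_tsum_mul_comm]
    _ ≤ freeInd p + ∑' w, ν w * (limitValue G p - freeInd p) := by
        gcongr with w; exact (exists_copAction G p).choose_spec w
    _ = limitValue G p := by
        rw [PMF.tsum_mul_const, add_tsub_cancel_of_le (freeInd_le_limitValue p)]

lemma stageValue_succ_le (p : V × V) (n : ℕ) (μ : PMF V) :
    stageValue G (n + 1) p ≤
      freeInd p + ∑' u, μ u * ∑' w, robAction G p n w * stageValue G n (step1 G p u w) := by
  refine add_le_add le_rfl ?_
  calc matrixValue (fun u w => stageValue G n (step1 G p u w))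
      = ∑' u, μ u * matrixValue (fun u w => stageValue G n (step1 G p u w)) :=
        (PMF.tsum_mul_const μ _).symm
    _ ≤ _ := by gcongr with u; exact (exists_robAction G p n).choose_spec u

end Value

section Strategies

variable (G : SimpleGraph V) [DecidableRel G.Adj]

def copStrategy (init : V × V) : Strat V := fun h => copAction G (lastPos init h)

/-- The robber plays optimally in the `(n - t)`-stage game at time `t`, i.e. on histories of
length `t + 1`. -/
def robStrategy (init : V × V) (n : ℕ) (h : List (V × V)) : PMF V :=
  robAction G (lastPos init h) (n - h.length)

lemma payoff_copStrategy_le (init : V × V) (πR : Strat V) :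
    payoff G (copStrategy G init) πR init ≤ limitValue G init :=
  payoff_le_of_supersolution fun h => freeInd_add_copAction_le (lastPos init h) (πR h)

lemma stageValue_le_payoff_robStrategy (init : V × V) (n : ℕ) (πC : Strat V) :
    stageValue G n init ≤ payoff G πC (robStrategy G init n) init := by
  refine le_payoff_of_subsolution (Φ := fun k => stageValue G (n - k))
    (by rw [Nat.sub_self]; rfl) fun k hk h hh => ?_
  have hlen := length_of_mem_support_play1 hh
  rw [show n - k = n - (k + 1) + 1 by omega, stepExp]
  simp only [robStrategy, hlen]
  exact stageValue_succ_le _ _ _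

end Strategies

theorem cccr_has_value_general (G : SimpleGraph V) [DecidableRel G.Adj] :
    ∀ init : V × V,
      (⨅ πC : Strat V, ⨆ πR : Strat V, payoff G πC πR init) =
        (⨆ πR : Strat V, ⨅ πC : Strat V, payoff G πC πR init) := by
  intro init
  refine le_antisymm ?_ (iSup_iInf_le_iInf_iSup fun πR πC => payoff G πC πR init)
  calc ⨅ πC : Strat V, ⨆ πR : Strat V, payoff G πC πR init
      ≤ limitValue G init :=
        iInf_le_of_le (copStrategy G init) (iSup_le (payoff_copStrategy_le G init))
    _ ≤ ⨆ πR : Strat V, ⨅ πC : Strat V, payoff G πC πR init :=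
        iSup_le fun n => le_iSup_of_le (robStrategy G init n)
          (le_iInf (stageValue_le_payoff_robStrategy G init n))

/-- the single-cop concurrent cops and robber game with the
expected-capture-time payoff has a value from every initial position. -/
theorem cccr_has_value (G : SimpleGraph V) [DecidableRel G.Adj] (hconn : G.Connected) :
    ∀ init : V × V,
      (⨅ πC : Strat V, ⨆ πR : Strat V, payoff G πC πR init) =
        (⨆ πR : Strat V, ⨅ πC : Strat V, payoff G πC πR init) :=
  cccr_has_value_general G
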